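/- Let S₁, S₂, S₃, S₄ be supplementary difference sets in Z/vZ with parameters 4-{v; k₁,k₂,k₃,k₄; λ} satisfying k₁+k₂+k₃+k₄ = v + λ. Define circulant ±1 matrices Aₗ by (Aₗ)_{ij} = −1 if i−j ∈ Sₗ and +1 otherwise. Then A₁ A₁ᵀ + A₂ A₂ᵀ + A₃ A₃ᵀ + A₄ A₄ᵀ = 4vI, and hence plugging A₁,…,A₄ into the Goethals–Seidel array yields a Hadamard matrix of order 4v. -/

import Mathlib

/-- The 4×4 block matrix built from the 4×4 array of blocks `M`. -/
def blockMat4 {m : Type*} (M : Fin 4 → Fin 4 → Matrix m m ℝ) :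
    Matrix (Fin 4 × m) (Fin 4 × m) ℝ :=
  Matrix.of fun p q => M p.1 q.1 p.2 q.2

/-- The anti-diagonal permutation (reversal) matrix on `ZMod n`. -/
def revMat (n : ℕ) : Matrix (ZMod n) (ZMod n) ℝ :=
  Matrix.of fun i j => if i + j + 1 = 0 then 1 else 0

/-- The Goethals–Seidel array of four matrices. -/
def GSarray {n : ℕ} [NeZero n] (A B C D : Matrix (ZMod n) (ZMod n) ℝ) :
    Matrix (Fin 4 × ZMod n) (Fin 4 × ZMod n) ℝ :=
  blockMat4
    ![![A, B * revMat n, C * revMat n, D * revMat n],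
      ![-(B * revMat n), A, D.transpose * revMat n, -(C.transpose * revMat n)],
      ![-(C * revMat n), -(D.transpose * revMat n), A, B.transpose * revMat n],
      ![-(D * revMat n), C.transpose * revMat n, -(B.transpose * revMat n), A]]

/-- The circulant ±1 matrix associated with a subset `S` of `ZMod v`:
entry `(i,j)` is `-1` if `i - j ∈ S` and `+1` otherwise. -/
def sdsMat (v : ℕ) [NeZero v] (S : Finset (ZMod v)) : Matrix (ZMod v) (ZMod v) ℝ :=
  Matrix.of fun i j => if i - j ∈ S then -1 else 1

/-! Write `χ_S = 1 - 2·1_S`, so that `sdsMat v S` is the circulant matrix of `χ_S`. The `(i, j)`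
entry of `A_S A_Sᵀ` is `v - 4|S| + 4 λ_S(i - j)`, where `λ_S(g) = diffCount S g` counts the
representations `g = r - s` with `r, s ∈ S`. Summed over the four sets, the diagonal entries are
`4v` and the off-diagonal ones vanish because `Σ λ_{Sₗ}(g) = λ` and `Σ kₗ = v + λ`.

For the Goethals–Seidel array, circulant matrices commute and the reversal matrix `R` satisfies
`R² = 1` and `R C = Cᵀ R` for circulant `C`. Hence the off-diagonal block products of `GS GSᵀ`
cancel in pairs, and each diagonal block equals `Σ Aₗ Aₗᵀ = 4v I`. -/

open Matrix

section BlockMat4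

variable {m : Type*}

lemma blockMat4_transpose (M : Fin 4 → Fin 4 → Matrix m m ℝ) :
    (blockMat4 M)ᵀ = blockMat4 fun i j => (M j i)ᵀ := rfl

lemma blockMat4_mul [Fintype m] (M N : Fin 4 → Fin 4 → Matrix m m ℝ) :
    blockMat4 M * blockMat4 N = blockMat4 fun i j => ∑ k, M i k * N k j := by
  ext ⟨p, i⟩ ⟨q, j⟩
  simp [blockMat4, mul_apply, Fintype.sum_prod_type, Matrix.sum_apply]

lemma blockMat4_ite_smul_one [DecidableEq m] (c : ℝ) :
    (blockMat4 fun i j => if i = j then c • 1 else 0) =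
      (c • 1 : Matrix (Fin 4 × m) (Fin 4 × m) ℝ) := by
  ext ⟨p, i⟩ ⟨q, j⟩
  by_cases hpq : p = q <;> simp [blockMat4, one_apply, hpq]

end BlockMat4

section RevMat

variable {n : ℕ} [NeZero n]

lemma mul_revMat_apply {m : Type*} (M : Matrix m (ZMod n) ℝ) (i : m) (j : ZMod n) :
    (M * revMat n) i j = M i (-j - 1) := by
  have hk (k : ZMod n) : k + j + 1 = 0 ↔ k = -j - 1 := by
    constructor <;> intro h <;> linear_combination h
  simp [mul_apply, revMat, hk]

lemma revMat_mul_apply {m : Type*} (M : Matrix (ZMod n) m ℝ) (i : ZMod n) (j : m) :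
    (revMat n * M) i j = M (-i - 1) j := by
  have hk (k : ZMod n) : i + k + 1 = 0 ↔ k = -i - 1 := by
    constructor <;> intro h <;> linear_combination h
  simp [mul_apply, revMat, hk]

omit [NeZero n] in
@[simp]
lemma revMat_transpose : (revMat n)ᵀ = revMat n := by
  ext i j
  simp only [revMat, transpose_apply, of_apply, add_comm j i]

@[simp]
lemma revMat_mul_self : revMat n * revMat n = 1 := by
  ext i j
  rw [mul_revMat_apply]
  simp [revMat, one_apply, ← sub_eq_zero (a := i), sub_eq_add_neg, add_assoc]

@[simp]
lemma revMat_mul_revMat_mul (M : Matrix (ZMod n) (ZMod n) ℝ) :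
    revMat n * (revMat n * M) = M := by
  rw [← Matrix.mul_assoc, revMat_mul_self, Matrix.one_mul]

lemma revMat_mul_circulant (f : ZMod n → ℝ) :
    revMat n * circulant f = circulant (fun i => f (-i)) * revMat n := by
  ext i j
  rw [mul_revMat_apply, revMat_mul_apply, circulant_apply, circulant_apply]
  ring_nf

end RevMat

section GoethalsSeidel

variable {n : ℕ} [NeZero n]

lemma revMat_mul_circulant_mul (f : ZMod n → ℝ) (M : Matrix (ZMod n) (ZMod n) ℝ) :
    revMat n * (circulant f * M) = circulant (fun i => f (-i)) * (revMat n * M) := by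
  rw [← Matrix.mul_assoc, revMat_mul_circulant, Matrix.mul_assoc]

lemma circulant_mul_left_comm (f g : ZMod n → ℝ) (M : Matrix (ZMod n) (ZMod n) ℝ) :
    circulant f * (circulant g * M) = circulant g * (circulant f * M) := by
  rw [← Matrix.mul_assoc, circulant_mul_comm, Matrix.mul_assoc]

theorem GSarray_circulant_mul_transpose (a b c d : ZMod n → ℝ) :
    GSarray (circulant a) (circulant b) (circulant c) (circulant d) *
        (GSarray (circulant a) (circulant b) (circulant c) (circulant d))ᵀ =
      blockMat4 fun i j => if i = j then
        circulant a * (circulant a)ᵀ + circulant b * (circulant b)ᵀ +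
          circulant c * (circulant c)ᵀ + circulant d * (circulant d)ᵀ else 0 := by
  rw [GSarray, blockMat4_transpose, blockMat4_mul]
  -- Moving `revMat` to the right via `R C = Cᵀ R` and sorting the commuting circulant factors
  -- (ordered rewriting) puts each block in a normal form where the off-diagonal terms cancel.
  congr 1
  funext i j
  fin_cases i <;> fin_cases j <;>
    simp [Fin.sum_univ_four, transpose_mul, transpose_circulant, Matrix.mul_assoc,
      revMat_mul_circulant_mul, revMat_mul_circulant, circulant_mul_left_comm,
      circulant_mul_comm] <;> abel

end GoethalsSeidel

section Counting

variable {G : Type*} [AddCommGroup G] [Fintype G] [DecidableEq G]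

def diffCount (S : Finset G) (g : G) : ℕ :=
  ((S ×ˢ S).filter fun p => p.1 - p.2 = g).card

lemma card_filter_sub_mem (S : Finset G) (x : G) :
    (Finset.univ.filter fun k => x - k ∈ S).card = S.card :=
  Finset.card_equiv (Equiv.subLeft x) (by simp)

lemma card_filter_sub_mem_and_sub_mem (S : Finset G) (x y : G) :
    (Finset.univ.filter fun k => x - k ∈ S ∧ y - k ∈ S).card = diffCount S (x - y) := by
  have snd_eq {p q : G} (h : p - q = x - y) : y - (x - p) = q := by
    rw [← sub_sub_self p q, h]; abel
  refine Finset.card_nbij' (fun k => (x - k, y - k)) (fun p => x - p.1) ?_ ?_ ?_ ?_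
  · intro k hk
    simp_all
  · rintro ⟨p, q⟩ hpq
    simp only [Finset.coe_filter, Finset.mem_product, Set.mem_ofPred_eq] at hpq
    simp [snd_eq hpq.2, hpq.1]
  · intro k _
    simp
  · rintro ⟨p, q⟩ hpq
    simp only [Finset.coe_filter, Finset.mem_product, Set.mem_ofPred_eq] at hpq
    simp [snd_eq hpq.2]

lemma diffCount_zero (S : Finset G) : diffCount S 0 = S.card := by
  rw [← sub_self (0 : G), ← card_filter_sub_mem_and_sub_mem, ← card_filter_sub_mem S 0]
  simp

end Counting

section SDS

variable {v : ℕ} [NeZero v]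

lemma sdsMat_eq_circulant (S : Finset (ZMod v)) :
    sdsMat v S = circulant fun g => if g ∈ S then -1 else 1 := rfl

lemma sdsMat_mul_transpose_apply (S : Finset (ZMod v)) (i j : ZMod v) :
    (sdsMat v S * (sdsMat v S)ᵀ) i j = v - 4 * S.card + 4 * diffCount S (i - j) := by
  have expand (k : ZMod v) : sdsMat v S i k * sdsMat v S j k =
      1 - 2 * (if i - k ∈ S then 1 else 0) - 2 * (if j - k ∈ S then 1 else 0) +
        4 * (if i - k ∈ S ∧ j - k ∈ S then 1 else 0) := by
    by_cases hi : i - k ∈ S <;> by_cases hj : j - k ∈ S <;> norm_num [sdsMat, hi, hj]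
  simp only [mul_apply, transpose_apply, expand, Finset.sum_add_distrib, Finset.sum_sub_distrib,
    ← Finset.mul_sum, Finset.sum_boole, card_filter_sub_mem, card_filter_sub_mem_and_sub_mem]
  simp only [Finset.sum_const, Finset.card_univ, ZMod.card, nsmul_eq_mul, mul_one]
  ring

theorem sum_sdsMat_mul_transpose {l : ℕ} {S₁ S₂ S₃ S₄ : Finset (ZMod v)}
    (hsds : ∀ g : ZMod v, g ≠ 0 →
      diffCount S₁ g + diffCount S₂ g + diffCount S₃ g + diffCount S₄ g = l)
    (hcard : S₁.card + S₂.card + S₃.card + S₄.card = v + l) :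
    sdsMat v S₁ * (sdsMat v S₁)ᵀ + sdsMat v S₂ * (sdsMat v S₂)ᵀ +
      sdsMat v S₃ * (sdsMat v S₃)ᵀ + sdsMat v S₄ * (sdsMat v S₄)ᵀ =
      ((4 * v : ℕ) : ℝ) • (1 : Matrix (ZMod v) (ZMod v) ℝ) := by
  ext i j
  simp only [Matrix.add_apply, sdsMat_mul_transpose_apply, Matrix.smul_apply, one_apply]
  split_ifs with hij
  · simp only [hij, sub_self, diffCount_zero, sub_add_cancel, smul_eq_mul, mul_one]
    push_cast
    ring
  · have hcardR : (S₁.card + S₂.card + S₃.card + S₄.card : ℝ) = v + l := by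
      exact_mod_cast hcard
    have hsdsR : (diffCount S₁ (i - j) + diffCount S₂ (i - j) + diffCount S₃ (i - j) +
        diffCount S₄ (i - j) : ℝ) = l := by
      exact_mod_cast hsds (i - j) (sub_ne_zero.2 hij)
    rw [smul_zero]
    linear_combination 4 * hsdsR - 4 * hcardR

end SDS

def IsSignMatrix {m n : Type*} (M : Matrix m n ℝ) : Prop :=
  ∀ i j, M i j = 1 ∨ M i j = -1

namespace IsSignMatrix

variable {m n : Type*}

@[simp]
lemma neg_iff {M : Matrix m n ℝ} : IsSignMatrix (-M) ↔ IsSignMatrix M := by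
  simp only [IsSignMatrix, Matrix.neg_apply, neg_eq_iff_eq_neg, neg_neg, or_comm]

@[simp]
lemma transpose_iff {M : Matrix m n ℝ} : IsSignMatrix Mᵀ ↔ IsSignMatrix M :=
  ⟨fun h i j => h j i, fun h i j => h j i⟩

lemma mul_revMat {k : ℕ} [NeZero k] {M : Matrix m (ZMod k) ℝ} (hM : IsSignMatrix M) :
    IsSignMatrix (M * revMat k) := by
  intro i j
  rw [mul_revMat_apply]
  exact hM i _

lemma blockMat4 {M : Fin 4 → Fin 4 → Matrix m m ℝ} (hM : ∀ i j, IsSignMatrix (M i j)) :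
    IsSignMatrix (_root_.blockMat4 M) :=
  fun p q => hM p.1 q.1 p.2 q.2

lemma GSarray {k : ℕ} [NeZero k] {A B C D : Matrix (ZMod k) (ZMod k) ℝ}
    (hA : IsSignMatrix A) (hB : IsSignMatrix B) (hC : IsSignMatrix C) (hD : IsSignMatrix D) :
    IsSignMatrix (_root_.GSarray A B C D) := by
  refine blockMat4 fun p q => ?_
  fin_cases p <;> fin_cases q <;> simp [hA, hB, hC, hD, mul_revMat]

end IsSignMatrix

lemma isSignMatrix_sdsMat {v : ℕ} [NeZero v] (S : Finset (ZMod v)) :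
    IsSignMatrix (sdsMat v S) := by
  intro i j
  by_cases h : i - j ∈ S <;> simp [sdsMat, h]

theorem hadamard_from_sds (v : ℕ) [NeZero v] (k₁ k₂ k₃ k₄ l : ℕ)
    (S₁ S₂ S₃ S₄ : Finset (ZMod v))
    (hc₁ : S₁.card = k₁) (hc₂ : S₂.card = k₂) (hc₃ : S₃.card = k₃) (hc₄ : S₄.card = k₄)
    (hsds : ∀ g : ZMod v, g ≠ 0 →
      ((S₁ ×ˢ S₁).filter (fun p => p.1 - p.2 = g)).card +
      ((S₂ ×ˢ S₂).filter (fun p => p.1 - p.2 = g)).card +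
      ((S₃ ×ˢ S₃).filter (fun p => p.1 - p.2 = g)).card +
      ((S₄ ×ˢ S₄).filter (fun p => p.1 - p.2 = g)).card = l)
    (hk : k₁ + k₂ + k₃ + k₄ = v + l) :
    sdsMat v S₁ * (sdsMat v S₁).transpose + sdsMat v S₂ * (sdsMat v S₂).transpose +
      sdsMat v S₃ * (sdsMat v S₃).transpose + sdsMat v S₄ * (sdsMat v S₄).transpose =
      ((4 * v : ℕ) : ℝ) • (1 : Matrix (ZMod v) (ZMod v) ℝ) ∧
    (∀ p q, GSarray (sdsMat v S₁) (sdsMat v S₂) (sdsMat v S₃) (sdsMat v S₄) p q = 1 ∨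
        GSarray (sdsMat v S₁) (sdsMat v S₂) (sdsMat v S₃) (sdsMat v S₄) p q = -1) ∧
    GSarray (sdsMat v S₁) (sdsMat v S₂) (sdsMat v S₃) (sdsMat v S₄) *
      (GSarray (sdsMat v S₁) (sdsMat v S₂) (sdsMat v S₃) (sdsMat v S₄)).transpose =
      ((4 * v : ℕ) : ℝ) • (1 : Matrix (Fin 4 × ZMod v) (Fin 4 × ZMod v) ℝ) := by
  subst hc₁ hc₂ hc₃ hc₄
  have hsum := sum_sdsMat_mul_transpose hsds hk
  refine ⟨hsum, (isSignMatrix_sdsMat S₁).GSarray (isSignMatrix_sdsMat S₂)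
    (isSignMatrix_sdsMat S₃) (isSignMatrix_sdsMat S₄), ?_⟩
  simp only [sdsMat_eq_circulant] at hsum ⊢
  rw [GSarray_circulant_mul_transpose, hsum, blockMat4_ite_smul_one]
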